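/- Let (G, 𝒫, 𝒯) be an instance of Partitioned Vertex Cover with solution U, let H be the Popular Matching instance constructed from (G, 𝒫, 𝒯), and let M* be the matching in H constructed from U. Then for every P ∈ 𝒫, there is no alternating path in H_{M*} that contains at least two edges labeled +2 by label_{M*} and consists only of edges of the Pair Selector gadget associated with P; and for every T ∈ 𝒯, there is no alternating path in H_{M*} that contains at least two edges labeled +2 by label_{M*} and consists only of edges of the Triple Selector gadget associated with T. -/

import Mathlib

open SimpleGraph

universe u

/-- A matching: a set of edges of `G` that are pairwise vertex-disjoint. -/
def IsMatching {W : Type u} (G : SimpleGraph W) (M : Set (Sym2 W)) : Prop :=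
  M ⊆ G.edgeSet ∧ ∀ e ∈ M, ∀ e' ∈ M, e ≠ e' → ∀ v : W, v ∈ e → v ∉ e'

/-- `v` is matched by `M`. -/
def Matched {W : Type u} (M : Set (Sym2 W)) (v : W) : Prop := ∃ w : W, s(v, w) ∈ M

open scoped Classical in
/-- `rank G pref M v = pref v (M(v))`, with the convention `|N(v)|+1` if `v` is unmatched. -/
noncomputable def rank {W : Type u} (G : SimpleGraph W) (pref : W → W → ℕ)
    (M : Set (Sym2 W)) (v : W) : ℕ :=
  if h : ∃ w : W, s(v, w) ∈ M then pref v h.choose else (G.neighborSet v).ncard + 1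

/-- The number of vertices preferring `M` over `M'`. -/
noncomputable def vote {W : Type u} (G : SimpleGraph W) (pref : W → W → ℕ)
    (M M' : Set (Sym2 W)) : ℕ :=
  {v : W | rank G pref M v < rank G pref M' v}.ncard

/-- A popular matching: no other matching is more popular. -/
def IsPopular {W : Type u} (G : SimpleGraph W) (pref : W → W → ℕ) (M : Set (Sym2 W)) : Prop :=
  IsMatching G M ∧
    ∀ M' : Set (Sym2 W), IsMatching G M' → vote G pref M' M ≤ vote G pref M M'

/-- Each vertex has a strict preference list: `pref v` is a bijection from the
neighborhood of `v` onto `{1, …, |N(v)|}`. -/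
def HasPref {W : Type u} (G : SimpleGraph W) (pref : W → W → ℕ) : Prop :=
  ∀ v : W, Set.BijOn (pref v) (G.neighborSet v) (Set.Icc 1 (G.neighborSet v).ncard)

/-- The edge `e ∉ M` is labeled `+2` by `label_M` (given rank function `rk`):
both endpoints prefer each other over their status in `M`. -/
def EdgePlus {W : Type u} (pref : W → W → ℕ) (rk : W → ℕ) (e : Sym2 W) : Prop :=
  ∃ x y : W, e = s(x, y) ∧ pref x y < rk x ∧ pref y x < rk y

/-- The edge `e ∉ M` is labeled `-2` by `label_M` (given rank function `rk`):
both endpoints prefer their status in `M` over each other. -/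
def EdgeMinus {W : Type u} (pref : W → W → ℕ) (rk : W → ℕ) (e : Sym2 W) : Prop :=
  ∃ x y : W, e = s(x, y) ∧ rk x < pref x y ∧ rk y < pref y x

/-- The graph `G_M`: the spanning subgraph of `G` consisting of the edges of `M`
together with the edges not labeled `-2`. -/
def GMgraph {W : Type u} (G : SimpleGraph W) (pref : W → W → ℕ) (M : Set (Sym2 W)) :
    SimpleGraph W where
  Adj x y := G.Adj x y ∧ (s(x, y) ∈ M ∨ ¬ EdgeMinus pref (rank G pref M) s(x, y))
  symm := by
    constructor
    intro x y h
    refine ⟨h.1.symm, ?_⟩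
    rw [Sym2.eq_swap]
    exact h.2
  loopless := ⟨fun x h => G.irrefl h.1⟩

/-- Consecutive edges alternate between `M` and non-`M`. -/
def altRel {W : Type u} (M : Set (Sym2 W)) (e e' : Sym2 W) : Prop := e ∈ M ↔ e' ∉ M

/-- An alternating path (with respect to `M`) in a graph `G'`. -/
def IsAltPath {W : Type u} (M : Set (Sym2 W)) {G' : SimpleGraph W} {x y : W}
    (p : G'.Walk x y) : Prop :=
  p.IsPath ∧ List.Chain' (altRel M) p.edges ∧
    (∀ e, p.edges.head? = some e → e ∉ M → ¬ Matched M x) ∧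
    (∀ e, p.edges.getLast? = some e → e ∉ M → ¬ Matched M y)

/-- An alternating cycle (with respect to `M`) in a graph `G'`:
the edges alternate cyclically between `M` and non-`M`. -/
def IsAltCycle {W : Type u} (M : Set (Sym2 W)) {G' : SimpleGraph W} {x : W}
    (p : G'.Walk x x) : Prop :=
  p.IsCycle ∧ List.Chain' (altRel M) (p.edges ++ p.edges.take 1)

/-- `l` contains at least one edge labeled `+2`. -/
def OnePlusEdge {W : Type u} (pref : W → W → ℕ) (rk : W → ℕ) (l : List (Sym2 W)) : Prop :=
  ∃ e ∈ l, EdgePlus pref rk e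

/-- `l` contains at least two edges labeled `+2`. -/
def TwoPlusEdges {W : Type u} (pref : W → W → ℕ) (rk : W → ℕ) (l : List (Sym2 W)) : Prop :=
  ∃ e ∈ l, ∃ e' ∈ l, e ≠ e' ∧ EdgePlus pref rk e ∧ EdgePlus pref rk e'

/-- A vertex cover. -/
def IsVC {V : Type u} (G : SimpleGraph V) (U : Set V) : Prop :=
  ∀ ⦃x y : V⦄, G.Adj x y → x ∈ U ∨ y ∈ U
/-- An instance of Partitioned Vertex Cover: `G` is a finite simple graph, `P` is a
collection of pairwise disjoint edges of `G`, `T` is a collection of pairwise disjoint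
3-element vertex sets each inducing a triangle in `G`, and every vertex of `G` lies in
exactly one member of `P ∪ T`. -/
def IsPVC {V : Type u} (G : SimpleGraph V) (P : Set (Sym2 V)) (T : Set (Finset V)) : Prop :=
  Finite V ∧
  P ⊆ G.edgeSet ∧
  (∀ e ∈ P, ∀ e' ∈ P, e ≠ e' → ∀ v : V, v ∈ e → v ∉ e') ∧
  (∀ t ∈ T, t.card = 3) ∧
  (∀ t ∈ T, ∀ x ∈ t, ∀ y ∈ t, x ≠ y → G.Adj x y) ∧
  (∀ t ∈ T, ∀ t' ∈ T, t ≠ t' → ∀ v : V, v ∈ t → v ∉ t') ∧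
  (∀ v : V, (∃ e ∈ P, v ∈ e) ∨ (∃ t ∈ T, v ∈ t)) ∧
  (∀ v : V, ¬ ((∃ e ∈ P, v ∈ e) ∧ (∃ t ∈ T, v ∈ t)))

/-- A solution of a Partitioned Vertex Cover instance: a vertex cover `U` with
`|U ∩ P| = 1` for every pair `P` and `|U ∩ T| = 2` for every triple `T`. -/
def IsPVCSolution {V : Type u} (G : SimpleGraph V) (P : Set (Sym2 V)) (T : Set (Finset V))
    (U : Set V) : Prop :=
  IsVC G U ∧
  (∀ e ∈ P, {x : V | x ∈ e ∧ x ∈ U}.ncard = 1) ∧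
  (∀ t ∈ T, {x : V | x ∈ t ∧ x ∈ U}.ncard = 2)

/-- The vertices of the graph `H` built from a Partitioned Vertex Cover instance:
`a i`, `b i`, `c i`, `d i` for a vertex `i` of `G`; `u i j` is the vertex `u^e_i` for the
edge `e = {i,j}` of `G`; `f i j` is the vertex `f_{ij}` for the pair `{i,j} ∈ P`. -/
inductive Gad (V : Type u) : Type u where
  | a : V → Gad V
  | b : V → Gad V
  | c : V → Gad V
  | d : V → Gad V
  | u : V → V → Gad V
  | f : V → V → Gad V
deriving DecidableEq

/-- Which formal gadget vertices are really vertices of `H`. -/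
def Gad.valid {V : Type u} (G : SimpleGraph V) (P : Set (Sym2 V)) : Gad V → Prop
  | .u i j => G.Adj i j
  | .f i j => s(i, j) ∈ P
  | _ => True

/-- The edges of `H`, up to symmetry. -/
inductive HBase {V : Type u} (G : SimpleGraph V) (P : Set (Sym2 V)) (T : Set (Finset V)) :
    Gad V → Gad V → Prop where
  | da (i : V) : HBase G P T (.d i) (.a i)
  | ab (i : V) : HBase G P T (.a i) (.b i)
  | ac (i : V) : HBase G P T (.a i) (.c i)
  | bc (i : V) : HBase G P T (.b i) (.c i)
  | uu {i j : V} (h : G.Adj i j) : HBase G P T (.u i j) (.u j i)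
  | bu {i j : V} (h : G.Adj i j) : HBase G P T (.b i) (.u i j)
  | df {i j : V} (h : s(i, j) ∈ P) : HBase G P T (.d i) (.f i j)
  | fc {i j : V} (h : s(i, j) ∈ P) : HBase G P T (.f i j) (.c j)
  | cd {i j : V} (h : s(i, j) ∈ P) : HBase G P T (.c i) (.d j)
  | dd {i j : V} {t : Finset V} (ht : t ∈ T) (hi : i ∈ t) (hj : j ∈ t) (hne : i ≠ j) :
      HBase G P T (.d i) (.d j)
  | cc {i j : V} {t : Finset V} (ht : t ∈ T) (hi : i ∈ t) (hj : j ∈ t) (hne : i ≠ j) :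
      HBase G P T (.c i) (.c j)

/-- The graph `H` of the Popular Matching instance built from `(G, P, T)`. -/
def Hgraph {V : Type u} (G : SimpleGraph V) (P : Set (Sym2 V)) (T : Set (Finset V)) :
    SimpleGraph {g : Gad V // Gad.valid G P g} where
  Adj x y := x ≠ y ∧ (HBase G P T x.1 y.1 ∨ HBase G P T y.1 x.1)
  symm := ⟨fun _ _ h => ⟨h.1.symm, h.2.symm⟩⟩
  loopless := ⟨fun _ h => h.1 rfl⟩

/-- The Popular Matching instance (graph together with preference lists) constructed
from a Partitioned Vertex Cover instance `(G, P, T)`.  The field `pref` gives the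
preference lists; all its values on the neighborhoods in `H` are pinned down, except
the ranks that `b i` assigns to the vertices `u^e_i`, which form an arbitrary fixed
bijection onto `{2, …, deg_G(i) + 1}`. -/
structure Reduction (V : Type u) [LinearOrder V] : Type u where
  G : SimpleGraph V
  P : Set (Sym2 V)
  T : Set (Finset V)
  ispvc : IsPVC G P T
  pref : Gad V → Gad V → ℕ
  pref_ab : ∀ i : V, pref (.a i) (.b i) = 1
  pref_ac : ∀ i : V, pref (.a i) (.c i) = 2
  pref_ad : ∀ i : V, pref (.a i) (.d i) = 3
  pref_ba : ∀ i : V, pref (.b i) (.a i) = 1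
  pref_bu : ∀ i : V, Set.BijOn (pref (.b i)) {g : Gad V | ∃ j : V, G.Adj i j ∧ g = .u i j}
      (Set.Icc 2 ((G.neighborSet i).ncard + 1))
  pref_bc : ∀ i : V, pref (.b i) (.c i) = (G.neighborSet i).ncard + 2
  pref_ca : ∀ i : V, pref (.c i) (.a i) = 1
  pref_cb : ∀ i : V, pref (.c i) (.b i) = 2
  pref_da : ∀ i : V, pref (.d i) (.a i) = 1
  pref_uu : ∀ i j : V, G.Adj i j → pref (.u i j) (.u j i) = 1
  pref_ub : ∀ i j : V, G.Adj i j → pref (.u i j) (.b i) = 2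
  pref_cf : ∀ i j : V, s(i, j) ∈ P → pref (.c i) (.f j i) = 3
  pref_cd : ∀ i j : V, s(i, j) ∈ P → pref (.c i) (.d j) = 4
  pref_dc : ∀ i j : V, s(i, j) ∈ P → pref (.d i) (.c j) = 2
  pref_df : ∀ i j : V, s(i, j) ∈ P → pref (.d i) (.f i j) = 3
  pref_fd : ∀ i j : V, s(i, j) ∈ P → pref (.f i j) (.d i) = 1
  pref_fc : ∀ i j : V, s(i, j) ∈ P → pref (.f i j) (.c j) = 2
  pref_tri : ∀ t ∈ T, ∀ i j k : V, t = {i, j, k} → i < j → j < k →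
    pref (.c i) (.c k) = 3 ∧ pref (.c i) (.c j) = 4 ∧
    pref (.c j) (.c i) = 3 ∧ pref (.c j) (.c k) = 4 ∧
    pref (.c k) (.c j) = 3 ∧ pref (.c k) (.c i) = 4 ∧
    pref (.d i) (.d j) = 2 ∧ pref (.d i) (.d k) = 3 ∧
    pref (.d j) (.d k) = 2 ∧ pref (.d j) (.d i) = 3 ∧
    pref (.d k) (.d i) = 2 ∧ pref (.d k) (.d j) = 3

namespace Reduction

variable {V : Type u} [LinearOrder V] (R : Reduction V)

/-- The vertex set of `H`. -/
abbrev HV : Type u := {g : Gad V // Gad.valid R.G R.P g}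

/-- The graph `H`. -/
def H : SimpleGraph R.HV := Hgraph R.G R.P R.T

/-- The preference lists of `H`, as a function on its vertices. -/
def prefH : R.HV → R.HV → ℕ := fun x y => R.pref x.1 y.1

/-- The vertex `a_i` of `H`. -/
def va (i : V) : R.HV := ⟨.a i, trivial⟩
/-- The vertex `b_i` of `H`. -/
def vb (i : V) : R.HV := ⟨.b i, trivial⟩
/-- The vertex `c_i` of `H`. -/
def vc (i : V) : R.HV := ⟨.c i, trivial⟩
/-- The vertex `d_i` of `H`. -/
def vd (i : V) : R.HV := ⟨.d i, trivial⟩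
/-- The vertex `u^e_i` of `H`, for an edge `e = {i,j}` of `G`. -/
def vu (i j : V) (h : R.G.Adj i j) : R.HV := ⟨.u i j, h⟩
/-- The vertex `f_{ij}` of `H`, for a pair `{i,j} ∈ P`. -/
def vf (i j : V) (h : s(i, j) ∈ R.P) : R.HV := ⟨.f i j, h⟩

/-- The matching `M*` in `H` constructed from a solution `U`. -/
def Mstar (U : Set V) : Set (Sym2 R.HV) :=
  {e : Sym2 R.HV |
    (∃ (i j : V) (h : R.G.Adj i j), e = s(R.vu i j h, R.vu j i h.symm)) ∨
    (∃ (x y : V) (h : s(x, y) ∈ R.P) (h' : s(y, x) ∈ R.P), x ∉ U ∧ y ∈ U ∧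
      (e = s(R.va x, R.vd x) ∨ e = s(R.vb x, R.vc x) ∨ e = s(R.va y, R.vb y) ∨
       e = s(R.vf x y h, R.vc y) ∨ e = s(R.vf y x h', R.vd y))) ∨
    (∃ t ∈ R.T, ∃ x y z : V, t = {x, y, z} ∧ x ∉ U ∧ y ∈ U ∧ z ∈ U ∧ y ≠ z ∧
      R.pref (.d x) (.d y) < R.pref (.d x) (.d z) ∧
      (e = s(R.va x, R.vd x) ∨ e = s(R.vb x, R.vc x) ∨ e = s(R.va y, R.vb y) ∨
       e = s(R.va z, R.vb z) ∨ e = s(R.vc y, R.vc z) ∨ e = s(R.vd y, R.vd z)))}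

end Reduction

/-- The vertex set of the Pair Selector gadget associated with a pair `{i,j}`. -/
def pairGadget {V : Type u} (i j : V) : Set (Gad V) :=
  {g : Gad V | ∃ x : V, (x = i ∨ x = j) ∧ (g = .a x ∨ g = .b x ∨ g = .c x ∨ g = .d x)} ∪
    {Gad.f i j, Gad.f j i}

/-- The vertex set of the Triple Selector gadget associated with a triple `t`. -/
def tripleGadget {V : Type u} (t : Finset V) : Set (Gad V) :=
  {g : Gad V | ∃ x ∈ t, g = .a x ∨ g = .b x ∨ g = .c x ∨ g = .d x}

/-!
Let `x` be the vertex of the pair or triple that is not in `U`. Reading off the ranks that `M*`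
gives to the gadget vertices (most of them get their first or second choice), every edge of the
gadget other than `a_x b_x` and `a_x c_x` has an endpoint that ranks its `M*`-partner at least as
high as the other endpoint, so these two are the only edges labeled `+2`. Both are unmatched and
meet at `a_x`; two edges of a path that share a vertex are consecutive, so an alternating path
contains at most one of them.
-/

namespace SimpleGraph.Walk

variable {W : Type u} {G : SimpleGraph W}

lemma edges_head?_eq_of_start_mem {x y : W} {p : G.Walk x y} (hp : p.support.Nodup)
    {e : Sym2 W} (he : e ∈ p.edges) (hx : x ∈ e) : p.edges.head? = some e := by
  cases p with
  | nil => simp at he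
  | cons h q =>
    rw [support_cons, List.nodup_cons] at hp
    rcases List.mem_cons.mp he with rfl | he
    · rfl
    · exact absurd (mem_support_iff_exists_mem_edges.mpr (.inr ⟨e, he, hx⟩)) hp.1

/-- Two edges of a path that share a vertex are consecutive, and consecutive edges of an
alternating path are not both outside `M`. -/
lemma eq_of_notMem_of_mem_of_mem (M : Set (Sym2 W)) {x y : W} {p : G.Walk x y}
    (hp : p.support.Nodup) (halt : p.edges.IsChain (altRel M)) {e e' : Sym2 W}
    (he : e ∈ p.edges) (he' : e' ∈ p.edges) (heM : e ∉ M) (he'M : e' ∉ M) {v : W}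
    (hv : v ∈ e) (hv' : v ∈ e') : e = e' := by
  induction p with
  | nil => simp at he
  | @cons a b c h q ih =>
    rw [support_cons, List.nodup_cons] at hp
    rw [edges_cons] at he he' halt
    have first_ne :
        ∀ f ∈ q.edges, v ∈ s(a, b) → v ∈ f → s(a, b) ∉ M → f ∉ M → False := by
      intro f hf hvab hvf habM hfM
      rcases Sym2.mem_iff.mp hvab with rfl | rfl
      · exact hp.1 (mem_support_iff_exists_mem_edges.mpr (.inr ⟨f, hf, hvf⟩))
      · obtain ⟨l, hl⟩ := List.head?_eq_some_iff.mp (edges_head?_eq_of_start_mem hp.2 hf hvf)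
        rw [hl, List.isChain_cons_cons] at halt
        exact habM (halt.1.mpr hfM)
    rcases List.mem_cons.mp he with rfl | he <;> rcases List.mem_cons.mp he' with rfl | he'
    · rfl
    · exact (first_ne e' he' hv hv' heM he'M).elim
    · exact (first_ne e he hv' hv he'M heM).elim
    · exact ih hp.2 halt.tail he he'

end SimpleGraph.Walk

section AlternatingPath

variable {W : Type u} {M : Set (Sym2 W)} {pref : W → W → ℕ} {rk : W → ℕ}

lemma edgePlus_mk_iff {u v : W} :
    EdgePlus pref rk s(u, v) ↔ pref u v < rk u ∧ pref v u < rk v := by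
  constructor
  · rintro ⟨p, q, heq, hp, hq⟩
    rcases Sym2.eq_iff.mp heq with ⟨rfl, rfl⟩ | ⟨rfl, rfl⟩
    exacts [⟨hp, hq⟩, ⟨hq, hp⟩]
  · exact fun h => ⟨u, v, rfl, h⟩

lemma rank_eq_of_partner {G : SimpleGraph W} {v w : W} (hvw : s(v, w) ∈ M)
    (huniq : ∀ w', s(v, w') ∈ M → w' = w) : rank G pref M v = pref v w := by
  have hex : ∃ w', s(v, w') ∈ M := ⟨w, hvw⟩
  rw [rank, dif_pos hex, huniq _ hex.choose_spec]

lemma not_edgePlus_of_partner {G : SimpleGraph W} {v w : W} (hvw : s(v, w) ∈ M)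
    (huniq : ∀ w', s(v, w') ∈ M → w' = w) : ¬ EdgePlus pref (rank G pref M) s(v, w) := by
  rw [edgePlus_mk_iff, rank_eq_of_partner hvw huniq]
  exact fun h => lt_irrefl _ h.1

lemma GMgraph_le (G : SimpleGraph W) (pref : W → W → ℕ) (M : Set (Sym2 W)) :
    GMgraph G pref M ≤ G :=
  fun _ _ h => h.1

lemma IsAltPath.not_twoPlusEdges {G' : SimpleGraph W} {x y : W} {p : G'.Walk x y}
    (hp : IsAltPath M p) {a : W}
    (h : ∀ e ∈ p.edges, EdgePlus pref rk e → a ∈ e ∧ e ∉ M) :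
    ¬ TwoPlusEdges pref rk p.edges := by
  rintro ⟨e, he, e', he', hne, hplus, hplus'⟩
  obtain ⟨ha, heM⟩ := h e he hplus
  obtain ⟨ha', he'M⟩ := h e' he' hplus'
  exact hne (Walk.eq_of_notMem_of_mem_of_mem M hp.1.support_nodup hp.2.1 he he' heM he'M ha ha')

lemma not_exists_altPath_twoPlusEdges {G' : SimpleGraph W} (S : W → Prop) {a : W}
    (h : ∀ e ∈ G'.edgeSet, (∀ v ∈ e, S v) → EdgePlus pref rk e → a ∈ e ∧ e ∉ M) :
    ¬ ∃ (x y : W) (p : G'.Walk x y), IsAltPath M p ∧ TwoPlusEdges pref rk p.edges ∧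
      ∀ v ∈ p.support, S v := by
  rintro ⟨x, y, p, hp, htwo, hS⟩
  refine hp.not_twoPlusEdges (fun e he => h e (p.edges_subset_edgeSet he) fun v hv => ?_) htwo
  exact hS v (Walk.mem_support_iff_exists_mem_edges.mpr (.inr ⟨e, he, hv⟩))

end AlternatingPath

namespace IsPVC

variable {V : Type u} {G : SimpleGraph V} {P : Set (Sym2 V)} {T : Set (Finset V)}

lemma adj_of_mem (h : IsPVC G P T) {i j : V} (hij : s(i, j) ∈ P) : G.Adj i j :=
  h.2.1 hij

lemma card_eq_three (h : IsPVC G P T) {t : Finset V} (ht : t ∈ T) : t.card = 3 :=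
  h.2.2.2.1 t ht

lemma eq_of_mem_of_mem (h : IsPVC G P T) {t t' : Finset V} (ht : t ∈ T) (ht' : t' ∈ T)
    {i : V} (hi : i ∈ t) (hi' : i ∈ t') : t = t' :=
  by_contra fun hne => h.2.2.2.2.2.1 t ht t' ht' hne i hi hi'

lemma notMem_of_mem_triple (h : IsPVC G P T) {t : Finset V} (ht : t ∈ T) {i : V} (hi : i ∈ t)
    {e : Sym2 V} (he : e ∈ P) : i ∉ e :=
  fun hie => h.2.2.2.2.2.2.2 i ⟨⟨e, he, hie⟩, t, ht, hi⟩

end IsPVC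

lemma Finset.exists_lt_lt_eq_of_card_eq_three {V : Type u} [LinearOrder V] {t : Finset V}
    (h : t.card = 3) : ∃ i j k : V, i < j ∧ j < k ∧ t = {i, j, k} := by
  have hf := (t.orderEmbOfFin h).strictMono
  refine ⟨_, _, _, hf (show (0 : Fin 3) < 1 by decide), hf (show (1 : Fin 3) < 2 by decide), ?_⟩
  ext w
  rw [← Finset.mem_coe, ← Finset.range_orderEmbOfFin t h, Set.mem_range]
  simp [Fin.exists_fin_succ, eq_comm]

lemma pairGadget_eq_of_mk_eq {V : Type u} {i j x y : V} (h : s(i, j) = s(x, y)) :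
    pairGadget i j = pairGadget x y := by
  rcases Sym2.eq_iff.mp h with ⟨rfl, rfl⟩ | ⟨rfl, rfl⟩
  · rfl
  · ext g; simp [pairGadget]; tauto

namespace Reduction

variable {V : Type u} [LinearOrder V] (R : Reduction V) {U : Set V}

@[simp] lemma val_va (i : V) : (R.va i).1 = .a i := rfl
@[simp] lemma val_vb (i : V) : (R.vb i).1 = .b i := rfl
@[simp] lemma val_vc (i : V) : (R.vc i).1 = .c i := rfl
@[simp] lemma val_vd (i : V) : (R.vd i).1 = .d i := rfl
@[simp] lemma val_vu (i j : V) (h : R.G.Adj i j) : (R.vu i j h).1 = .u i j := rfl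
@[simp] lemma val_vf (i j : V) (h : s(i, j) ∈ R.P) : (R.vf i j h).1 = .f i j := rfl
@[simp] lemma prefH_apply (v w : R.HV) : R.prefH v w = R.pref v.1 w.1 := rfl

local notation "rankM" => rank R.H R.prefH (R.Mstar U)

attribute [local simp] pref_ab pref_ac pref_ad pref_ba pref_bc pref_cb pref_da pref_cd pref_dc
  pref_df pref_fd pref_fc

lemma exists_mk_eq_notMem_mem (hU : IsPVCSolution R.G R.P R.T U) {e : Sym2 V} (he : e ∈ R.P) :
    ∃ x y : V, e = s(x, y) ∧ x ∉ U ∧ y ∈ U := by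
  obtain ⟨y, hy⟩ := Set.ncard_eq_one.mp (hU.2.1 e he)
  have hyU : y ∈ {v | v ∈ e ∧ v ∈ U} := hy ▸ rfl
  obtain ⟨x, rfl⟩ := Sym2.mem_iff_exists.mp hyU.1
  refine ⟨x, y, Sym2.eq_swap, fun hxU => (R.ispvc.adj_of_mem he).ne ?_, hyU.2⟩
  have hx : x ∈ {v | v ∈ s(y, x) ∧ v ∈ U} := ⟨Sym2.mem_mk_right y x, hxU⟩
  rw [hy] at hx
  exact hx.symm

lemma le_pref_of_mem_triple {t : Finset V} (ht : t ∈ R.T) {i j : V} (hi : i ∈ t) (hj : j ∈ t)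
    (hij : i ≠ j) : 2 ≤ R.pref (.d i) (.d j) ∧ 3 ≤ R.pref (.c i) (.c j) := by
  obtain ⟨p, q, r, hpq, hqr, rfl⟩ :=
    Finset.exists_lt_lt_eq_of_card_eq_three (R.ispvc.card_eq_three ht)
  have := R.pref_tri _ ht p q r rfl hpq hqr
  simp only [Finset.mem_insert, Finset.mem_singleton] at hi hj
  rcases hi with rfl | rfl | rfl <;> rcases hj with rfl | rfl | rfl <;> simp_all

lemma pref_d_ne_of_mem_triple {t : Finset V} (ht : t ∈ R.T) {i j k : V} (hi : i ∈ t)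
    (hj : j ∈ t) (hk : k ∈ t) (hij : i ≠ j) (hik : i ≠ k) (hjk : j ≠ k) :
    R.pref (.d i) (.d j) ≠ R.pref (.d i) (.d k) := by
  obtain ⟨p, q, r, hpq, hqr, rfl⟩ :=
    Finset.exists_lt_lt_eq_of_card_eq_three (R.ispvc.card_eq_three ht)
  have := R.pref_tri _ ht p q r rfl hpq hqr
  simp only [Finset.mem_insert, Finset.mem_singleton] at hi hj hk
  have := hpq.ne; have := hqr.ne; have := (hpq.trans hqr).ne
  rcases hi with rfl | rfl | rfl <;> rcases hj with rfl | rfl | rfl <;>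
    rcases hk with rfl | rfl | rfl <;> simp_all

/-- The naming `x, y, z` of the vertices of a triple used in the definition of `M*`. -/
def IsTripleLabeling (U : Set V) (t : Finset V) (x y z : V) : Prop :=
  t = {x, y, z} ∧ x ∉ U ∧ y ∈ U ∧ z ∈ U ∧ y ≠ z ∧
    R.pref (.d x) (.d y) < R.pref (.d x) (.d z)

lemma exists_isTripleLabeling (hU : IsPVCSolution R.G R.P R.T U) {t : Finset V}
    (ht : t ∈ R.T) : ∃ x y z : V, R.IsTripleLabeling U t x y z := by
  classical
  have hin : (t.filter (· ∈ U)).card = 2 := by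
    rw [← Set.ncard_coe_finset, ← hU.2.2 t ht]
    congr 1; ext; simp
  have hout : (t.filter (· ∉ U)).card = 1 := by
    have := t.card_filter_add_card_filter_not (· ∈ U)
    rw [R.ispvc.card_eq_three ht] at this
    omega
  obtain ⟨y, z, hyz, hyzU⟩ := Finset.card_eq_two.mp hin
  obtain ⟨x, hxU⟩ := Finset.card_eq_one.mp hout
  have memU : ∀ w, w ∈ t ∧ w ∈ U ↔ w = y ∨ w = z := by
    intro w; simpa using Finset.ext_iff.mp hyzU w
  have memNU : ∀ w, w ∈ t ∧ w ∉ U ↔ w = x := by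
    intro w; simpa using Finset.ext_iff.mp hxU w
  obtain ⟨hxt, hx⟩ := (memNU x).mpr rfl
  obtain ⟨hyt, hy⟩ := (memU y).mpr (.inl rfl)
  obtain ⟨hzt, hz⟩ := (memU z).mpr (.inr rfl)
  have htxyz : t = {x, y, z} := by
    ext w
    simp only [Finset.mem_insert, Finset.mem_singleton, ← memNU, ← memU]
    by_cases w ∈ U <;> tauto
  have hxy : x ≠ y := fun h => hx (h ▸ hy)
  have hxz : x ≠ z := fun h => hx (h ▸ hz)
  rcases lt_or_gt_of_ne (R.pref_d_ne_of_mem_triple ht hxt hyt hzt hxy hxz hyz) with hlt | hgt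
  · exact ⟨x, y, z, htxyz, hx, hy, hz, hyz, hlt⟩
  · refine ⟨x, z, y, ?_, hx, hz, hy, hyz.symm, hgt⟩
    rw [htxyz, Finset.pair_comm]

lemma mem_Mstar_of_pair {x y : V} (hP : s(x, y) ∈ R.P) (hx : x ∉ U) (hy : y ∈ U) :
    s(R.va x, R.vd x) ∈ R.Mstar U ∧ s(R.vb x, R.vc x) ∈ R.Mstar U ∧
      s(R.va y, R.vb y) ∈ R.Mstar U ∧ s(R.vf x y hP, R.vc y) ∈ R.Mstar U ∧
      ∀ hP' : s(y, x) ∈ R.P, s(R.vf y x hP', R.vd y) ∈ R.Mstar U := by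
  have hP' : s(y, x) ∈ R.P := Sym2.eq_swap ▸ hP
  refine ⟨?_, ?_, ?_, ?_, fun _ => ?_⟩ <;>
    exact .inr (.inl ⟨x, y, hP, hP', hx, hy, by tauto⟩)

lemma mem_Mstar_of_triple {t : Finset V} (ht : t ∈ R.T) {x y z : V}
    (hl : R.IsTripleLabeling U t x y z) :
    s(R.va x, R.vd x) ∈ R.Mstar U ∧ s(R.vb x, R.vc x) ∈ R.Mstar U ∧
      s(R.va y, R.vb y) ∈ R.Mstar U ∧ s(R.va z, R.vb z) ∈ R.Mstar U ∧
      s(R.vc y, R.vc z) ∈ R.Mstar U ∧ s(R.vd y, R.vd z) ∈ R.Mstar U := by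
  obtain ⟨htxyz, hx, hy, hz, hyz, hord⟩ := hl
  refine ⟨?_, ?_, ?_, ?_, ?_, ?_⟩ <;>
    exact .inr (.inr ⟨t, ht, x, y, z, htxyz, hx, hy, hz, hyz, hord, by tauto⟩)

lemma partner_of_notMem {x : V} (hx : x ∉ U) :
    (∀ w, s(R.va x, w) ∈ R.Mstar U → w = R.vd x) ∧
      (∀ w, s(R.vc x, w) ∈ R.Mstar U → w = R.vb x) ∧
      (∀ w, s(R.vd x, w) ∈ R.Mstar U → w = R.va x) ∧
      ∀ j (hP : s(x, j) ∈ R.P) w, s(R.vf x j hP, w) ∈ R.Mstar U → w = R.vc j := by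
  refine ⟨fun w h => ?_, fun w h => ?_, fun w h => ?_, fun j hP w h => ?_⟩ <;>
  · rcases h with ⟨i, k, hik, h⟩ | ⟨p, q, hpq, hqp, hp, hq, h | h | h | h | h⟩ |
      ⟨t, -, p, q, r, -, hp, hq, hr, -, -, h | h | h | h | h | h⟩ <;>
    rcases Sym2.eq_iff.mp h with ⟨h₁, h₂⟩ | ⟨h₁, h₂⟩ <;>
    simp_all [va, vb, vc, vd, vu, vf, Subtype.ext_iff]

lemma partner_of_mem {y : V} (hy : y ∈ U) :
    (∀ w, s(R.va y, w) ∈ R.Mstar U → w = R.vb y) ∧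
      (∀ w, s(R.vb y, w) ∈ R.Mstar U → w = R.va y) ∧
      ∀ j (hP : s(y, j) ∈ R.P) w, s(R.vf y j hP, w) ∈ R.Mstar U → w = R.vd y := by
  refine ⟨fun w h => ?_, fun w h => ?_, fun j hP w h => ?_⟩ <;>
  · rcases h with ⟨i, k, hik, h⟩ | ⟨p, q, hpq, hqp, hp, hq, h | h | h | h | h⟩ |
      ⟨t, -, p, q, r, -, hp, hq, hr, -, -, h | h | h | h | h | h⟩ <;>
    rcases Sym2.eq_iff.mp h with ⟨h₁, h₂⟩ | ⟨h₁, h₂⟩ <;>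
    simp_all [va, vb, vc, vd, vu, vf, Subtype.ext_iff]

lemma partner_of_triple {t : Finset V} (ht : t ∈ R.T) {x y z : V} (htxyz : t = {x, y, z})
    (hx : x ∉ U) (hy : y ∈ U) :
    (∀ w, s(R.vc y, w) ∈ R.Mstar U → w = R.vc z) ∧
      (∀ w, s(R.vd y, w) ∈ R.Mstar U → w = R.vd z) := by
  have hyt : y ∈ t := by simp [htxyz]
  have hnP : ∀ p, s(p, y) ∉ R.P ∧ s(y, p) ∉ R.P := fun p =>
    ⟨fun h => R.ispvc.notMem_of_mem_triple ht hyt h (Sym2.mem_mk_right p y),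
     fun h => R.ispvc.notMem_of_mem_triple ht hyt h (Sym2.mem_mk_left y p)⟩
  -- `t` is the only triple containing `y`, and `y`, `z` are its vertices in `U`
  have key : ∀ t' ∈ R.T, ∀ p q r, t' = {p, q, r} → q ∈ U → r ∈ U → q ≠ r →
      (y = q → r = z) ∧ (y = r → q = z) := by
    have other : ∀ t' ∈ R.T, ∀ r, y ∈ t' → r ∈ t' → r ∈ U → y ≠ r → r = z := by
      intro t' ht' r hyt' hr hrU hyr
      rw [← R.ispvc.eq_of_mem_of_mem ht ht' hyt hyt', htxyz] at hr
      simp only [Finset.mem_insert, Finset.mem_singleton] at hr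
      rcases hr with rfl | rfl | rfl
      exacts [absurd hrU hx, absurd rfl hyr, rfl]
    rintro t' ht' p q r rfl hq hr hqr
    exact ⟨fun hyq => other _ ht' r (by simp [hyq]) (by simp) hr (hyq ▸ hqr),
      fun hyr => other _ ht' q (by simp [hyr]) (by simp) hq (hyr ▸ hqr.symm)⟩
  refine ⟨fun w h => ?_, fun w h => ?_⟩ <;>
  · rcases h with ⟨i, k, hik, h⟩ | ⟨p, q, hpq, hqp, hp, hq, h | h | h | h | h⟩ |
      ⟨t', ht', p, q, r, ht'', hp, hq, hr, hqr, -, h⟩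
    on_goal 7 =>
      obtain ⟨hyq, hyr⟩ := key t' ht' p q r ht'' hq hr hqr
      rcases h with h | h | h | h | h | h
    all_goals clear key; rcases Sym2.eq_iff.mp h with ⟨h₁, h₂⟩ | ⟨h₁, h₂⟩ <;>
      simp_all [va, vb, vc, vd, vu, vf, Subtype.ext_iff]

lemma rank_of_notMem {x : V} (hx : x ∉ U) (had : s(R.va x, R.vd x) ∈ R.Mstar U)
    (hbc : s(R.vb x, R.vc x) ∈ R.Mstar U) : rankM (R.vd x) = 1 ∧ rankM (R.vc x) = 2 := by
  obtain ⟨-, hc, hd, -⟩ := R.partner_of_notMem hx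
  rw [rank_eq_of_partner (Sym2.eq_swap ▸ had) hd, rank_eq_of_partner (Sym2.eq_swap ▸ hbc) hc]
  exact ⟨R.pref_da x, R.pref_cb x⟩

lemma rank_of_mem {y : V} (hy : y ∈ U) (hab : s(R.va y, R.vb y) ∈ R.Mstar U) :
    rankM (R.va y) = 1 ∧ rankM (R.vb y) = 1 := by
  obtain ⟨ha, hb, -⟩ := R.partner_of_mem hy
  rw [rank_eq_of_partner hab ha, rank_eq_of_partner (Sym2.eq_swap ▸ hab) hb]
  exact ⟨R.pref_ab y, R.pref_ba y⟩

lemma rank_vf_of_notMem {x j : V} (hx : x ∉ U) (hP : s(x, j) ∈ R.P)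
    (hfc : s(R.vf x j hP, R.vc j) ∈ R.Mstar U) : rankM (R.vf x j hP) = 2 := by
  rw [rank_eq_of_partner hfc ((R.partner_of_notMem hx).2.2.2 j hP)]
  exact R.pref_fc x j hP

lemma rank_vf_of_mem {y j : V} (hy : y ∈ U) (hP : s(y, j) ∈ R.P)
    (hfd : s(R.vf y j hP, R.vd y) ∈ R.Mstar U) : rankM (R.vf y j hP) = 1 := by
  rw [rank_eq_of_partner hfd ((R.partner_of_mem hy).2.2 j hP)]
  exact R.pref_fd y j hP

@[elab_as_elim]
lemma edgeSet_induction {motive : Sym2 R.HV → Prop}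
    (da : ∀ i, motive s(R.vd i, R.va i)) (ab : ∀ i, motive s(R.va i, R.vb i))
    (ac : ∀ i, motive s(R.va i, R.vc i)) (bc : ∀ i, motive s(R.vb i, R.vc i))
    (uu : ∀ i j (h : R.G.Adj i j), motive s(R.vu i j h, R.vu j i h.symm))
    (bu : ∀ i j (h : R.G.Adj i j), motive s(R.vb i, R.vu i j h))
    (df : ∀ i j (h : s(i, j) ∈ R.P), motive s(R.vd i, R.vf i j h))
    (fc : ∀ i j (h : s(i, j) ∈ R.P), motive s(R.vf i j h, R.vc j))
    (cd : ∀ i j, s(i, j) ∈ R.P → motive s(R.vc i, R.vd j))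
    (dd : ∀ t ∈ R.T, ∀ i ∈ t, ∀ j ∈ t, i ≠ j → motive s(R.vd i, R.vd j))
    (cc : ∀ t ∈ R.T, ∀ i ∈ t, ∀ j ∈ t, i ≠ j → motive s(R.vc i, R.vc j))
    {e : Sym2 R.HV} (he : e ∈ R.H.edgeSet) : motive e := by
  have base : ∀ {g g' : Gad V} (hg : Gad.valid R.G R.P g) (hg' : Gad.valid R.G R.P g'),
      HBase R.G R.P R.T g g' → motive s(⟨g, hg⟩, ⟨g', hg'⟩) := by
    intro g g' hg hg' hb
    cases hb with
    | da i => exact da i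
    | ab i => exact ab i
    | ac i => exact ac i
    | bc i => exact bc i
    | uu h => exact uu _ _ h
    | bu h => exact bu _ _ h
    | df h => exact df _ _ h
    | fc h => exact fc _ _ h
    | cd h => exact cd _ _ h
    | dd ht hi hj hne => exact dd _ ht _ hi _ hj hne
    | cc ht hi hj hne => exact cc _ ht _ hi _ hj hne
  induction e using Sym2.ind with
  | _ u v =>
    obtain ⟨-, hb | hb⟩ := he
    · exact base u.2 v.2 hb
    · rw [Sym2.eq_swap]
      exact base v.2 u.2 hb

lemma rank_pairGadget {x y : V} (hP : s(x, y) ∈ R.P) (hx : x ∉ U) (hy : y ∈ U) :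
    rankM (R.vd x) = 1 ∧ rankM (R.vc x) = 2 ∧ rankM (R.va y) = 1 ∧ rankM (R.vb y) = 1 ∧
      rankM (R.vf x y hP) = 2 ∧ ∀ hP' : s(y, x) ∈ R.P, rankM (R.vf y x hP') = 1 := by
  obtain ⟨hax, hbx, hay, hfx, hfy⟩ := R.mem_Mstar_of_pair hP hx hy
  exact ⟨(R.rank_of_notMem hx hax hbx).1, (R.rank_of_notMem hx hax hbx).2,
    (R.rank_of_mem hy hay).1, (R.rank_of_mem hy hay).2, R.rank_vf_of_notMem hx hP hfx,
    fun hP' => R.rank_vf_of_mem hy hP' (hfy hP')⟩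

lemma eq_of_edgePlus_of_pairGadget {x y : V} (hP : s(x, y) ∈ R.P) (hx : x ∉ U) (hy : y ∈ U)
    {e : Sym2 R.HV} (he : e ∈ R.H.edgeSet) :
    (∀ v ∈ e, v.1 ∈ pairGadget x y) → EdgePlus R.prefH rankM e →
      e = s(R.va x, R.vb x) ∨ e = s(R.va x, R.vc x) := by
  have ranks := R.rank_pairGadget hP hx hy
  refine R.edgeSet_induction ?da ?ab ?ac ?bc ?uu ?bu ?df ?fc ?cd ?dd ?cc he
  case uu | bu => intro i j h hS; simpa [pairGadget] using hS _ (Sym2.mem_mk_right _ _)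
  case dd | cc =>
    intro t ht i hi j hj hij hS
    refine R.ispvc.notMem_of_mem_triple ht hi hP (Sym2.mem_iff.mpr ?_) |>.elim
    simpa [pairGadget] using hS _ (Sym2.mem_mk_left _ _)
  case da | ab | ac | bc =>
    intro i hS hplus
    obtain rfl | rfl : i = x ∨ i = y := by simpa [pairGadget] using hS
    all_goals simp [edgePlus_mk_iff, ranks] at hplus ⊢
  case df =>
    intro i j hij hS hplus
    obtain ⟨rfl, rfl⟩ | ⟨rfl, rfl⟩ : i = x ∧ j = y ∨ i = y ∧ j = x := by
      simpa [pairGadget] using hS _ (Sym2.mem_mk_right _ _)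
    all_goals simp [edgePlus_mk_iff, ranks, hij] at hplus
  case fc =>
    intro i j hij hS hplus
    obtain ⟨rfl, rfl⟩ | ⟨rfl, rfl⟩ : i = x ∧ j = y ∨ i = y ∧ j = x := by
      simpa [pairGadget] using hS _ (Sym2.mem_mk_left _ _)
    all_goals simp [edgePlus_mk_iff, ranks, hij] at hplus
  case cd =>
    intro i j hij hS hplus
    have hne := (R.ispvc.adj_of_mem hij).ne
    obtain ⟨hi, hj⟩ : (i = x ∨ i = y) ∧ (j = x ∨ j = y) := by simpa [pairGadget] using hS
    rcases hi with rfl | rfl <;> rcases hj with rfl | rfl <;>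
      first | exact absurd rfl hne | simp [edgePlus_mk_iff, ranks, hP, hij] at hplus

lemma rank_tripleGadget {t : Finset V} (ht : t ∈ R.T) {x y z : V}
    (hl : R.IsTripleLabeling U t x y z) :
    rankM (R.vd x) = 1 ∧ rankM (R.vc x) = 2 ∧
      ∀ i ∈ t, i = x ∨ rankM (R.va i) = 1 ∧ rankM (R.vb i) = 1 := by
  obtain ⟨hax, hbx, hay, haz, -⟩ := R.mem_Mstar_of_triple ht hl
  obtain ⟨htxyz, hx, hy, hz, -⟩ := hl
  refine ⟨(R.rank_of_notMem hx hax hbx).1, (R.rank_of_notMem hx hax hbx).2, fun i hi => ?_⟩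
  rw [htxyz] at hi
  simp only [Finset.mem_insert, Finset.mem_singleton] at hi
  rcases hi with rfl | rfl | rfl
  exacts [.inl rfl, .inr (R.rank_of_mem hy hay), .inr (R.rank_of_mem hz haz)]

lemma not_edgePlus_of_isTripleLabeling {t : Finset V} (ht : t ∈ R.T) {x y z : V}
    (hl : R.IsTripleLabeling U t x y z) {i j : V} (hi : i ∈ t) (hj : j ∈ t) (hix : i ≠ x)
    (hjx : j ≠ x) (hij : i ≠ j) :
    ¬ EdgePlus R.prefH rankM s(R.vc i, R.vc j) ∧
      ¬ EdgePlus R.prefH rankM s(R.vd i, R.vd j) := by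
  obtain ⟨-, -, -, -, hcyz, hdyz⟩ := R.mem_Mstar_of_triple ht hl
  obtain ⟨htxyz, hx, hy, hz, -⟩ := hl
  rw [htxyz] at hi hj
  simp only [Finset.mem_insert, Finset.mem_singleton] at hi hj
  rcases hi with rfl | rfl | rfl <;> rcases hj with rfl | rfl | rfl <;>
    simp only [ne_eq, not_true_eq_false] at hix hjx hij
  · obtain ⟨hc, hd⟩ := R.partner_of_triple ht htxyz hx hy
    exact ⟨not_edgePlus_of_partner hcyz hc, not_edgePlus_of_partner hdyz hd⟩
  · obtain ⟨hc, hd⟩ := R.partner_of_triple ht (by rw [htxyz, Finset.pair_comm]) hx hz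
    exact ⟨not_edgePlus_of_partner (Sym2.eq_swap ▸ hcyz) hc,
      not_edgePlus_of_partner (Sym2.eq_swap ▸ hdyz) hd⟩

lemma eq_of_edgePlus_of_tripleGadget {t : Finset V} (ht : t ∈ R.T) {x y z : V}
    (hl : R.IsTripleLabeling U t x y z) {e : Sym2 R.HV} (he : e ∈ R.H.edgeSet) :
    (∀ v ∈ e, v.1 ∈ tripleGadget t) → EdgePlus R.prefH rankM e →
      e = s(R.va x, R.vb x) ∨ e = s(R.va x, R.vc x) := by
  obtain ⟨hdx, hcx, hmem⟩ := R.rank_tripleGadget ht hl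
  refine R.edgeSet_induction ?da ?ab ?ac ?bc ?uu ?bu ?df ?fc ?cd ?dd ?cc he
  case uu | bu | df => intro i j h hS; simpa [tripleGadget] using hS _ (Sym2.mem_mk_right _ _)
  case fc => intro i j h hS; simpa [tripleGadget] using hS _ (Sym2.mem_mk_left _ _)
  case cd =>
    intro i j hij hS
    refine R.ispvc.notMem_of_mem_triple ht ?_ hij (Sym2.mem_mk_left i j) |>.elim
    simpa [tripleGadget] using hS _ (Sym2.mem_mk_left _ _)
  case da | ab | ac | bc =>
    intro i hS hplus
    rcases hmem i (by simpa [tripleGadget] using hS _ (Sym2.mem_mk_left _ _)) with rfl | hab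
    · simp [edgePlus_mk_iff, hdx, hcx] at hplus ⊢
    · simp [edgePlus_mk_iff, hab] at hplus
  case dd | cc =>
    intro t' ht' i hi' j hj' hij hS hplus
    obtain ⟨hi, hj⟩ : i ∈ t ∧ j ∈ t := by simpa [tripleGadget] using hS
    have hpref := R.le_pref_of_mem_triple ht' hi' hj' hij
    have hpref' := R.le_pref_of_mem_triple ht' hj' hi' hij.symm
    have hM := R.not_edgePlus_of_isTripleLabeling ht hl hi hj
    simp only [edgePlus_mk_iff, prefH_apply, val_vc, val_vd] at hplus hM
    rcases eq_or_ne i x with rfl | hix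
    · omega
    rcases eq_or_ne j x with rfl | hjx
    · omega
    tauto

lemma va_mem_and_notMem_Mstar {x : V} (hx : x ∉ U) {e : Sym2 R.HV}
    (he : e = s(R.va x, R.vb x) ∨ e = s(R.va x, R.vc x)) : R.va x ∈ e ∧ e ∉ R.Mstar U := by
  have ha := (R.partner_of_notMem hx).1
  rcases he with rfl | rfl <;> refine ⟨Sym2.mem_mk_left _ _, fun h => ?_⟩ <;>
    simpa [Subtype.ext_iff] using ha _ h

end Reduction

/-- No alternating path in `H_{M*}` contains at least two edges labeled `+2` and
consists only of edges of a single Pair Selector or Triple Selector gadget. -/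
theorem no_bad_alt_path_in_gadgets {V : Type u} [LinearOrder V] (R : Reduction V) (U : Set V)
    (hU : IsPVCSolution R.G R.P R.T U) :
    (∀ e ∈ R.P, ∀ i j : V, e = s(i, j) →
      ¬ ∃ (x y : R.HV) (p : (GMgraph R.H R.prefH (R.Mstar U)).Walk x y),
        IsAltPath (R.Mstar U) p ∧
        TwoPlusEdges R.prefH (rank R.H R.prefH (R.Mstar U)) p.edges ∧
        ∀ v ∈ p.support, v.1 ∈ pairGadget i j) ∧
    (∀ t ∈ R.T,
      ¬ ∃ (x y : R.HV) (p : (GMgraph R.H R.prefH (R.Mstar U)).Walk x y),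
        IsAltPath (R.Mstar U) p ∧
        TwoPlusEdges R.prefH (rank R.H R.prefH (R.Mstar U)) p.edges ∧
        ∀ v ∈ p.support, v.1 ∈ tripleGadget t) := by
  have hle := edgeSet_mono (GMgraph_le R.H R.prefH (R.Mstar U))
  constructor
  · rintro _ he i j rfl
    obtain ⟨x, y, hxy, hx, hy⟩ := R.exists_mk_eq_notMem_mem hU he
    rw [pairGadget_eq_of_mk_eq hxy]
    exact not_exists_altPath_twoPlusEdges _ fun e he' hS hplus => R.va_mem_and_notMem_Mstar hx
      (R.eq_of_edgePlus_of_pairGadget (hxy ▸ he) hx hy (hle he') hS hplus)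
  · intro t ht
    obtain ⟨x, y, z, hl⟩ := R.exists_isTripleLabeling hU ht
    exact not_exists_altPath_twoPlusEdges _ fun e he hS hplus => R.va_mem_and_notMem_Mstar hl.2.1
      (R.eq_of_edgePlus_of_tripleGadget ht hl (hle he) hS hplus)
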